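/- Let k ≥ 3, let ρ be an h-ary central relation and σ an s-ary central relation on E_k with 2 ≤ s < h. If Pol{ρ,σ} is maximal in Pol ρ, then σ is of type IV, i.e., C_ρ ∩ C_σ ≠ ∅. -/

import Mathlib

/-- The set of finitary operations on `Fin k` (all arities). -/
abbrev Op (k : ℕ) := Σ n : ℕ, ((Fin n → Fin k) → Fin k)

/-- An `n`-ary operation `f` preserves an `h`-ary relation `ρ`. -/
def Preserves {k n h : ℕ} (f : (Fin n → Fin k) → Fin k)
    (ρ : Set (Fin h → Fin k)) : Prop :=
  ∀ a : Fin h → Fin n → Fin k,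
    (∀ i : Fin n, (fun j => a j i) ∈ ρ) → (fun j => f (a j)) ∈ ρ

/-- An `n`-ary operation preserves a unary relation (a subset of `Fin k`). -/
def PreservesU {k n : ℕ} (f : (Fin n → Fin k) → Fin k) (σ : Set (Fin k)) : Prop :=
  ∀ x : Fin n → Fin k, (∀ i, x i ∈ σ) → f x ∈ σ

/-- `Pol ρ` for a single `h`-ary relation. -/
def Pol1 {k h : ℕ} (ρ : Set (Fin h → Fin k)) : Set (Op k) :=
  {f | Preserves f.2 ρ}

/-- `Pol {ρ, σ}` for two relations of possibly different arities. -/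
def Pol2 {k h s : ℕ} (ρ : Set (Fin h → Fin k)) (σ : Set (Fin s → Fin k)) : Set (Op k) :=
  Pol1 ρ ∩ Pol1 σ

/-- `Pol σ` for a unary relation. -/
def PolU {k : ℕ} (σ : Set (Fin k)) : Set (Op k) :=
  {f | PreservesU f.2 σ}

/-- A clone: contains all projections and is closed under composition. -/
structure IsClone (k : ℕ) (C : Set (Op k)) : Prop where
  proj : ∀ (n : ℕ) (i : Fin n), (⟨n, fun x => x i⟩ : Op k) ∈ C
  comp : ∀ (n m : ℕ) (g : (Fin m → Fin k) → Fin k)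
      (f : Fin m → (Fin n → Fin k) → Fin k),
      (⟨m, g⟩ : Op k) ∈ C → (∀ i, (⟨n, f i⟩ : Op k) ∈ C) →
      (⟨n, fun x => g fun i => f i x⟩ : Op k) ∈ C

/-- `C` is maximal in `D`: `C ⊊ D` and no clone lies strictly between them. -/
def MaximalIn {k : ℕ} (C D : Set (Op k)) : Prop :=
  C ⊂ D ∧ ∀ E : Set (Op k), IsClone k E → ¬(C ⊂ E ∧ E ⊂ D)

/-- The clone generated by a set `F` of operations. -/
def CloneGen (k : ℕ) (F : Set (Op k)) : Set (Op k) :=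
  ⋂₀ {C : Set (Op k) | IsClone k C ∧ F ⊆ C}

/-- Totally reflexive: contains every tuple with a repeated entry. -/
def TotallyReflexive {k h : ℕ} (ρ : Set (Fin h → Fin k)) : Prop :=
  ∀ a : Fin h → Fin k, (∃ i j : Fin h, i ≠ j ∧ a i = a j) → a ∈ ρ

/-- Totally symmetric: invariant under all permutations of coordinates. -/
def TotallySymmetric {k h : ℕ} (ρ : Set (Fin h → Fin k)) : Prop :=
  ∀ a ∈ ρ, ∀ π : Equiv.Perm (Fin h), (a ∘ π) ∈ ρ

/-- The center of an `h`-ary relation: those `c` such that every tuple whose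
first coordinate is `c` belongs to the relation. -/
def Center {k h : ℕ} (ρ : Set (Fin h → Fin k)) : Set (Fin k) :=
  {c | ∀ a : Fin h → Fin k, (∀ i : Fin h, (i : ℕ) = 0 → a i = c) → a ∈ ρ}

/-- A central relation: totally reflexive, totally symmetric, with nonempty
proper center. -/
def IsCentralRel {k h : ℕ} (ρ : Set (Fin h → Fin k)) : Prop :=
  TotallyReflexive ρ ∧ TotallySymmetric ρ ∧ (Center ρ).Nonempty ∧ Center ρ ≠ Set.univ

/-- A unary central relation: a nonempty proper subset of `Fin k`. -/
def IsCentralU {k : ℕ} (σ : Set (Fin k)) : Prop :=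
  σ.Nonempty ∧ σ ≠ Set.univ

/-- `B` is a `ρ`-chain: `B^h ⊆ ρ`. -/
def RhoChain {k h : ℕ} (ρ : Set (Fin h → Fin k)) (B : Set (Fin k)) : Prop :=
  ∀ a : Fin h → Fin k, (∀ i, a i ∈ B) → a ∈ ρ

/-- A maximal `ρ`-chain. -/
def MaxRhoChain {k h : ℕ} (ρ : Set (Fin h → Fin k)) (B : Set (Fin k)) : Prop :=
  RhoChain ρ B ∧ ∀ D : Set (Fin k), RhoChain ρ D → B ⊆ D → B = D

/-- The arity-`h` tuple `(a, b, …, b)`; for `h = 2` this is the pair `(a, b)`. -/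
def pair2 {k : ℕ} (h : ℕ) (a b : Fin k) : Fin h → Fin k :=
  fun i => if (i : ℕ) = 0 then a else b

/-- Recasting an `s`-ary relation along an arity equality `s = h`. -/
def recast {k s h : ℕ} (e : s = h) (σ : Set (Fin s → Fin k)) :
    Set (Fin h → Fin k) :=
  {a | (fun i : Fin s => a (Fin.cast e i)) ∈ σ}

/-- Type I: `σ` is unary and `C_ρ ∩ σ ≠ ∅`. -/
def TypeI {k h s : ℕ} (ρ : Set (Fin h → Fin k)) (σ : Set (Fin s → Fin k)) : Prop :=
  s = 1 ∧ (Center ρ ∩ Center σ).Nonempty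

/-- Type II: `σ` unary, `h = 2`, `ρ = {(a,b) : ∃ u ∈ σ, (a,u) ∈ ρ ∧ (b,u) ∈ ρ}`,
and every maximal `ρ`-chain meets `σ`. -/
def TypeII {k h s : ℕ} (ρ : Set (Fin h → Fin k)) (σ : Set (Fin s → Fin k)) : Prop :=
  s = 1 ∧ h = 2 ∧
  (∀ a b : Fin k, pair2 h a b ∈ ρ ↔
      ∃ u ∈ Center σ, pair2 h a u ∈ ρ ∧ pair2 h b u ∈ ρ) ∧
  ∀ B : Set (Fin k), MaxRhoChain ρ B → (B ∩ Center σ).Nonempty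

/-- Type III: `s = h` and `ρ`, `σ` are comparable. -/
def TypeIII {k h s : ℕ} (ρ : Set (Fin h → Fin k)) (σ : Set (Fin s → Fin k)) : Prop :=
  ∃ e : s = h, recast e σ ⊂ ρ ∨ ρ ⊂ recast e σ

/-- Type IV: `2 ≤ s < h` and `C_ρ ∩ C_σ ≠ ∅`. -/
def TypeIV {k h s : ℕ} (ρ : Set (Fin h → Fin k)) (σ : Set (Fin s → Fin k)) : Prop :=
  2 ≤ s ∧ s < h ∧ (Center ρ ∩ Center σ).Nonempty

/-- Type V: `2 ≤ h < s` and `λ ⊊ σ`, where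
`λ = {(a_1,…,a_s) : (a_1,…,a_h) ∈ ρ}`. -/
def TypeV {k h s : ℕ} (ρ : Set (Fin h → Fin k)) (σ : Set (Fin s → Fin k)) : Prop :=
  2 ≤ h ∧ ∃ hlt : h < s,
    {a : Fin s → Fin k | (fun i : Fin h => a (Fin.castLE hlt.le i)) ∈ ρ} ⊂ σ

/-- Type I for a unary relation given as a subset of `Fin k`. -/
def TypeIU {k h : ℕ} (ρ : Set (Fin h → Fin k)) (σ : Set (Fin k)) : Prop :=
  (Center ρ ∩ σ).Nonempty

/-- Type II for a unary relation given as a subset of `Fin k`. -/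
def TypeIIU {k h : ℕ} (ρ : Set (Fin h → Fin k)) (σ : Set (Fin k)) : Prop :=
  h = 2 ∧
  (∀ a b : Fin k, pair2 h a b ∈ ρ ↔
      ∃ u ∈ σ, pair2 h a u ∈ ρ ∧ pair2 h b u ∈ ρ) ∧
  ∀ B : Set (Fin k), MaxRhoChain ρ B → (B ∩ σ).Nonempty

/-!
Suppose `C_ρ ∩ C_σ = ∅`. Pick `c₀ ∈ C_ρ` and `s₀ ∈ C_σ`. The primitive positive formula
`∃ u, ⋀_Y σ(u, Y) ∧ ⋀_X ρ(u, X)`, with one block of fresh variables for each `(s-1)`-tuple `Y` and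
each `(h-1)`-tuple `X`, defines a relation `δ` invariant under `Pol {ρ, σ}`; evaluated at the tuple
listing all the `Y`s and `X`s it says that `C_ρ ∩ C_σ` is nonempty, so that tuple is not in `δ`.
Then `Pol {ρ, σ} ⊊ Pol {ρ, δ} ⊊ Pol ρ`:
* retracting `E_k` onto the entries of an `s`-tuple `b ∉ σ` with `b₀ = c₀` preserves `ρ` and `δ`,
  since `s < h`, but not `σ`, since it moves `(s₀, b₁, …)` to `b`;
* the operation sending the rows of the matrix whose columns are the elements of `δ` to the
  generic tuple, and everything else to `c₀`, preserves `ρ` but not `δ`.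
-/

open Function

section Clone

variable {k : ℕ}

theorem IsClone.inter {C D : Set (Op k)} (hC : IsClone k C) (hD : IsClone k D) :
    IsClone k (C ∩ D) where
  proj n i := ⟨hC.proj n i, hD.proj n i⟩
  comp n m g f hg hf :=
    ⟨hC.comp n m g f hg.1 fun i => (hf i).1, hD.comp n m g f hg.2 fun i => (hf i).2⟩

theorem isClone_pol1 {h : ℕ} (ρ : Set (Fin h → Fin k)) : IsClone k (Pol1 ρ) where
  proj _ i _ ha := ha i
  comp _ _ _ f hg hf a ha := hg (fun j i => f i (a j)) fun i => hf i a ha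

theorem isClone_pol2 {h s : ℕ} (ρ : Set (Fin h → Fin k)) (σ : Set (Fin s → Fin k)) :
    IsClone k (Pol2 ρ σ) :=
  (isClone_pol1 ρ).inter (isClone_pol1 σ)

theorem Preserves.cons_mem {m n : ℕ} {f : (Fin n → Fin k) → Fin k}
    {ρ : Set (Fin (m + 1) → Fin k)} (hf : Preserves f ρ) {u : Fin n → Fin k}
    {x : Fin m → Fin n → Fin k} (hx : ∀ i, Fin.cons (u i) (fun p => x p i) ∈ ρ) :
    Fin.cons (f u) (fun p => f (x p)) ∈ ρ := by
  have h := hf (Fin.cons u x) fun i => by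
    convert hx i using 1
    exact Fin.comp_cons (fun v : Fin n → Fin k => v i) u x
  convert h using 1
  exact (Fin.comp_cons f u x).symm

theorem preserves_of_forall_mem_chain {h n : ℕ} {ρ : Set (Fin h → Fin k)} {B : Set (Fin k)}
    (hB : RhoChain ρ B) {f : (Fin n → Fin k) → Fin k} (hf : ∀ x, f x ∈ B) : Preserves f ρ :=
  fun _ _ => hB _ fun _ => hf _

end Clone

section Central

variable {k : ℕ}

theorem mem_of_apply_eq_of_mem_center {h : ℕ} {ρ : Set (Fin h → Fin k)}
    (hρs : TotallySymmetric ρ) {c : Fin k} (hc : c ∈ Center ρ) {a : Fin h → Fin k} {j : Fin h}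
    (ha : a j = c) : a ∈ ρ := by
  let π := Equiv.swap (⟨0, j.pos⟩ : Fin h) j
  have h := hρs (a ∘ π) (hc _ fun i hi => by
    obtain rfl : i = ⟨0, j.pos⟩ := Fin.ext hi
    simpa [π] using ha) π
  simpa [π, comp_assoc, ← Equiv.Perm.coe_mul] using h

theorem cons_mem_of_mem_center {m : ℕ} {ρ : Set (Fin (m + 1) → Fin k)} {c : Fin k}
    (hc : c ∈ Center ρ) (x : Fin m → Fin k) : Fin.cons c x ∈ ρ :=
  hc _ fun i hi => by rw [show i = 0 from Fin.ext hi, Fin.cons_zero]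

theorem mem_center_of_forall_cons_mem {m : ℕ} {ρ : Set (Fin (m + 1) → Fin k)} {c : Fin k}
    (hc : ∀ x : Fin m → Fin k, Fin.cons c x ∈ ρ) : c ∈ Center ρ := fun a ha => by
  simpa [← ha 0 rfl] using hc (Fin.tail a)

theorem exists_apply_zero_eq_notMem {m : ℕ} {ρ : Set (Fin (m + 1) → Fin k)} {c : Fin k}
    (hc : c ∉ Center ρ) : ∃ a : Fin (m + 1) → Fin k, a 0 = c ∧ a ∉ ρ := by
  simp only [Center, Set.mem_ofPred_eq, not_forall] at hc
  obtain ⟨a, ha, haρ⟩ := hc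
  exact ⟨a, ha 0 rfl, haρ⟩

/-- A tail with entries in a set of at most `m` elements that contains a central element either
repeats or hits that element. -/
theorem cons_mem_of_forall_mem {m : ℕ} {ρ : Set (Fin (m + 1) → Fin k)}
    (hρr : TotallyReflexive ρ) (hρs : TotallySymmetric ρ) {c : Fin k} (hc : c ∈ Center ρ)
    {B : Finset (Fin k)} (hcB : c ∈ B) (hB : B.card ≤ m) (u : Fin k) {x : Fin m → Fin k}
    (hx : ∀ i, x i ∈ B) : Fin.cons u x ∈ ρ := by
  by_cases hinj : Injective x
  · have himage : Finset.univ.image x = B :=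
      Finset.eq_of_subset_of_card_le (fun y hy => by
        obtain ⟨i, -, rfl⟩ := Finset.mem_image.1 hy
        exact hx i) (by simpa [Finset.card_image_of_injective _ hinj] using hB)
    obtain ⟨i, -, hi⟩ := Finset.mem_image.1 (himage ▸ hcB)
    exact mem_of_apply_eq_of_mem_center hρs hc (j := i.succ) (by simpa using hi)
  · obtain ⟨i, j, hij, hne⟩ : ∃ i j, x i = x j ∧ i ≠ j := by simpa [Injective] using hinj
    exact hρr _ ⟨i.succ, j.succ, (Fin.succ_injective _).ne hne, by simpa using hij⟩

theorem rhoChain_of_card_le {m : ℕ} {ρ : Set (Fin (m + 1) → Fin k)}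
    (hρr : TotallyReflexive ρ) (hρs : TotallySymmetric ρ) {c : Fin k} (hc : c ∈ Center ρ)
    {B : Finset (Fin k)} (hcB : c ∈ B) (hB : B.card ≤ m) : RhoChain ρ B := fun a ha => by
  rw [← Fin.cons_self_tail a]
  exact cons_mem_of_forall_mem hρr hρs hc hcB hB _ fun i => ha i.succ

/-- The operation whose arity is `|δ|`: it sends the `l`-th row of the matrix whose columns are
the elements of `δ` to `β l`, and every other argument to `c`. -/
theorem exists_mem_pol1_notMem_pol1 {h t : ℕ} {ρ : Set (Fin h → Fin k)}
    {δ : Set (Fin t → Fin k)} (hρr : TotallyReflexive ρ) (hρs : TotallySymmetric ρ) {c : Fin k}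
    (hc : c ∈ Center ρ) {β : Fin t → Fin k} (hβ : β ∉ δ)
    (hsep : ∀ i j, i ≠ j → ∃ m ∈ δ, m i ≠ m j)
    (hgen : ∀ I : Fin h → Fin t, Injective I → ∃ m ∈ δ, m ∘ I ∉ ρ) :
    ∃ G ∈ Pol1 ρ, G ∉ Pol1 δ := by
  obtain ⟨N, ⟨ee⟩⟩ : ∃ N, Nonempty (δ ≃ Fin N) := ⟨_, ⟨Finite.equivFin δ⟩⟩
  let row (l : Fin t) (col : Fin N) : Fin k := (ee.symm col).1 l
  have hrow : Injective row := fun i j hij => by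
    by_contra hne
    obtain ⟨m, hm, hmij⟩ := hsep i j hne
    exact hmij (by simpa [row] using congrFun hij (ee ⟨m, hm⟩))
  refine ⟨⟨_, extend row β fun _ => c⟩, fun a ha => ?_, fun hG => hβ ?_⟩
  · by_cases hrows : ∀ j, ∃ l, row l = a j
    · choose I hI using hrows
      by_cases hIinj : Injective I
      · obtain ⟨m, hm, hmρ⟩ := hgen I hIinj
        refine absurd ?_ hmρ
        convert ha (ee ⟨m, hm⟩) using 1
        funext j
        simp [← hI j, row]
      · obtain ⟨i, j, hij, hne⟩ : ∃ i j, I i = I j ∧ i ≠ j := by simpa [Injective] using hIinj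
        exact hρr _ ⟨i, j, hne, by simp only [← hI i, ← hI j, hij]⟩
    · obtain ⟨j, hj⟩ := not_forall.1 hrows
      exact mem_of_apply_eq_of_mem_center hρs hc (j := j) (extend_apply' β (fun _ => c) _ hj)
  · have h := hG (fun l => row l) fun col => by simp [row]
    convert h using 1
    exact funext fun l => (hrow.extend_apply β (fun _ => c) l).symm

end Central

section LinkRel

variable {k s h : ℕ} {ρ : Set (Fin (h + 1) → Fin k)} {σ : Set (Fin (s + 1) → Fin k)}

abbrev LinkIdx (k s h : ℕ) : Type := ((Fin s → Fin k) × Fin s) ⊕ ((Fin h → Fin k) × Fin h)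

noncomputable def linkEquiv (k s h : ℕ) : LinkIdx k s h ≃ Fin (Fintype.card (LinkIdx k s h)) :=
  Fintype.equivFin _

/-- The relation defined by `∃ u, ⋀_Y σ(u, Y) ∧ ⋀_X ρ(u, X)`, where `Y` and `X` name blocks of
coordinates indexed by all `s`-tuples and all `h`-tuples. -/
def linkRel (ρ : Set (Fin (h + 1) → Fin k)) (σ : Set (Fin (s + 1) → Fin k)) :
    Set (Fin (Fintype.card (LinkIdx k s h)) → Fin k) :=
  {a | ∃ u, (∀ Y, Fin.cons u (fun p => a (linkEquiv k s h (.inl (Y, p)))) ∈ σ) ∧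
    ∀ X, Fin.cons u (fun p => a (linkEquiv k s h (.inr (X, p)))) ∈ ρ}

noncomputable def genericTuple (k s h : ℕ) : Fin (Fintype.card (LinkIdx k s h)) → Fin k :=
  fun l => Sum.elim (fun Y => Y.1 Y.2) (fun X => X.1 X.2) ((linkEquiv k s h).symm l)

theorem Preserves.linkRel {n : ℕ} {f : (Fin n → Fin k) → Fin k} (hfρ : Preserves f ρ)
    (hfσ : Preserves f σ) : Preserves f (linkRel ρ σ) := fun _ ha => by
  choose u hσ hρ using ha
  exact ⟨f u, fun Y => hfσ.cons_mem fun i => hσ i Y, fun X => hfρ.cons_mem fun i => hρ i X⟩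

theorem genericTuple_notMem_linkRel (hne : ¬(Center ρ ∩ Center σ).Nonempty) :
    genericTuple k s h ∉ linkRel ρ σ := fun ⟨u, hσ, hρ⟩ =>
  hne ⟨u, mem_center_of_forall_cons_mem fun X => by simpa [genericTuple] using hρ X,
    mem_center_of_forall_cons_mem fun Y => by simpa [genericTuple] using hσ Y⟩

theorem rhoChain_linkRel (hρr : TotallyReflexive ρ) (hρs : TotallySymmetric ρ) {c₀ s₀ : Fin k}
    (hc₀ : c₀ ∈ Center ρ) (hs₀ : s₀ ∈ Center σ) {B : Finset (Fin k)} (hcB : c₀ ∈ B)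
    (hB : B.card ≤ h) : RhoChain (linkRel ρ σ) B := fun _ ha =>
  ⟨s₀, fun _ => cons_mem_of_mem_center hs₀ _,
    fun _ => cons_mem_of_forall_mem hρr hρs hc₀ hcB hB _ fun _ => ha _⟩

/-- The tuple `A ∉ ρ` with `A₀ = s₀` is planted along `I`; the filler `c₀` or `s₀` is chosen
according to whether the positions `I 1, …, I h` form exactly one `X`-block. -/
theorem exists_mem_linkRel_comp_notMem (hs : 0 < s) (hρr : TotallyReflexive ρ)
    (hσr : TotallyReflexive σ) (hσs : TotallySymmetric σ) {c₀ s₀ : Fin k}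
    (hc₀ : c₀ ∈ Center ρ) (hs₀ : s₀ ∈ Center σ) (hs₀ρ : s₀ ∉ Center ρ)
    {I : Fin (h + 1) → Fin (Fintype.card (LinkIdx k s h))} (hI : Injective I) :
    ∃ m ∈ linkRel ρ σ, m ∘ I ∉ ρ := by
  obtain ⟨A, hA0, hAρ⟩ := exists_apply_zero_eq_notMem hs₀ρ
  let e := linkEquiv k s h
  let S := Finset.univ.image fun j : Fin h => I j.succ
  let block (X : Fin h → Fin k) := Finset.univ.image fun p => e (.inr (X, p))
  have hcomp (fill : Fin k) : extend I A (fun _ => fill) ∘ I = A :=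
    funext fun j => hI.extend_apply _ _ j
  have hval (fill : Fin k) {q} (hq : q ∉ S) :
      extend I A (fun _ => fill) q = s₀ ∨ extend I A (fun _ => fill) q = fill := by
    by_cases hex : ∃ j, I j = q
    · obtain ⟨j, rfl⟩ := hex
      cases j using Fin.cases with
      | zero => exact .inl (by rw [hI.extend_apply, hA0])
      | succ j => exact absurd (Finset.mem_image_of_mem _ (Finset.mem_univ j)) hq
    · exact .inr (extend_apply' _ _ _ hex)
  by_cases hblock : ∃ X, S = block X
  · obtain ⟨X₀, hX₀⟩ := hblock
    refine ⟨extend I A fun _ => c₀, ⟨c₀, fun Y => ?_, fun _ => cons_mem_of_mem_center hc₀ _⟩,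
      by rwa [hcomp]⟩
    let p₀ : Fin s := ⟨0, hs⟩
    have hq : e (.inl (Y, p₀)) ∉ S := by simp [hX₀, block]
    rcases hval c₀ hq with h | h
    · exact mem_of_apply_eq_of_mem_center hσs hs₀ (j := p₀.succ) (by simpa using h)
    · exact hσr _ ⟨0, p₀.succ, (Fin.succ_ne_zero _).symm, by simpa using h.symm⟩
  · simp only [not_exists] at hblock
    refine ⟨extend I A fun _ => s₀, ⟨s₀, fun _ => cons_mem_of_mem_center hs₀ _, fun X => ?_⟩,
      by rwa [hcomp]⟩
    obtain ⟨p, hp⟩ : ∃ p, e (.inr (X, p)) ∉ S := by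
      by_contra! hsub
      have hS : S.card ≤ h := Finset.card_image_le.trans (by simp)
      have hX : (block X).card = h := (Finset.card_image_of_injective _
        (e.injective.comp (Sum.inr_injective.comp (Prod.mk_right_injective X)))).trans (by simp)
      refine hblock X (Finset.eq_of_subset_of_card_le ?_ (hS.trans hX.ge)).symm
      simpa [block, Finset.image_subset_iff] using hsub
    have h := (hval s₀ hp).elim id id
    exact hρr _ ⟨0, p.succ, (Fin.succ_ne_zero _).symm, by simpa using h.symm⟩

theorem exists_mem_linkRel_apply_ne (hρr : TotallyReflexive ρ) (hρs : TotallySymmetric ρ)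
    {c₀ s₀ : Fin k} (hc₀ : c₀ ∈ Center ρ) (hs₀ : s₀ ∈ Center σ) (h2 : 2 ≤ h) (hne : s₀ ≠ c₀)
    {i j : Fin (Fintype.card (LinkIdx k s h))} (hij : i ≠ j) :
    ∃ m ∈ linkRel ρ σ, m i ≠ m j := by
  classical
  refine ⟨fun l => if l = i then s₀ else c₀, rhoChain_linkRel hρr hρs hc₀ hs₀
    (B := {c₀, s₀}) (by simp) (Finset.card_le_two.trans h2) _ fun l => ?_,
    by simp [hij.symm, hne]⟩
  by_cases hl : l = i <;> simp [hl]

theorem exists_mem_pol2_linkRel_notMem_pol1 (hρr : TotallyReflexive ρ)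
    (hρs : TotallySymmetric ρ) (hσs : TotallySymmetric σ) {c₀ s₀ : Fin k} (hc₀ : c₀ ∈ Center ρ)
    (hs₀ : s₀ ∈ Center σ) (hc₀σ : c₀ ∉ Center σ) (hsh : s < h) :
    ∃ F ∈ Pol2 ρ (linkRel ρ σ), F ∉ Pol1 σ := by
  classical
  obtain ⟨b, hb0, hbσ⟩ := exists_apply_zero_eq_notMem hc₀σ
  let B := Finset.univ.image b
  have hcB : c₀ ∈ B := hb0 ▸ Finset.mem_image_of_mem b (Finset.mem_univ 0)
  have hB : B.card ≤ h := Finset.card_image_le.trans (by simpa using hsh)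
  have hs₀B : s₀ ∉ B := fun hs₀B => by
    obtain ⟨i, -, hi⟩ := Finset.mem_image.1 hs₀B
    exact hbσ (mem_of_apply_eq_of_mem_center hσs hs₀ hi)
  let r (x : Fin k) : Fin k := if x ∈ B then x else c₀
  have hr (x : Fin k) : r x ∈ B := by by_cases hx : x ∈ B <;> simp [r, hx, hcB]
  refine ⟨⟨1, fun x => r (x 0)⟩,
    ⟨preserves_of_forall_mem_chain (rhoChain_of_card_le hρr hρs hc₀ hcB hB) fun _ => hr _,
      preserves_of_forall_mem_chain (rhoChain_linkRel hρr hρs hc₀ hs₀ hcB hB) fun _ => hr _⟩,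
    fun hF => hbσ ?_⟩
  have h := hF (fun j _ => Fin.cons s₀ (Fin.tail b) j) fun _ => cons_mem_of_mem_center hs₀ _
  convert h using 1
  funext j
  cases j using Fin.cases with
  | zero => simp [r, hs₀B, hb0]
  | succ j => simp [r, B, Fin.tail]

end LinkRel

theorem typeIV_of_maximal_general {k h s : ℕ} (hs : 2 ≤ s) (hsh : s < h)
    (ρ : Set (Fin h → Fin k)) (σ : Set (Fin s → Fin k))
    (hρ : IsCentralRel ρ) (hσ : IsCentralRel σ)
    (hmax : MaximalIn (Pol2 ρ σ) (Pol1 ρ)) :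
    (Center ρ ∩ Center σ).Nonempty := by
  by_contra hne
  obtain ⟨s, rfl⟩ : ∃ s', s = s' + 1 := ⟨s - 1, by omega⟩
  obtain ⟨h, rfl⟩ : ∃ h', h = h' + 1 := ⟨h - 1, by omega⟩
  obtain ⟨hρr, hρs, ⟨c₀, hc₀⟩, -⟩ := hρ
  obtain ⟨hσr, hσs, ⟨s₀, hs₀⟩, -⟩ := hσ
  have hc₀σ : c₀ ∉ Center σ := fun hc₀σ => hne ⟨c₀, hc₀, hc₀σ⟩
  have hs₀ρ : s₀ ∉ Center ρ := fun hs₀ρ => hne ⟨s₀, hs₀ρ, hs₀⟩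
  obtain ⟨F, hF, hFσ⟩ :=
    exists_mem_pol2_linkRel_notMem_pol1 hρr hρs hσs hc₀ hs₀ hc₀σ (by omega)
  obtain ⟨G, hG, hGδ⟩ :=
    exists_mem_pol1_notMem_pol1 hρr hρs hc₀ (genericTuple_notMem_linkRel hne)
      (fun _ _ => exists_mem_linkRel_apply_ne hρr hρs hc₀ hs₀ (by omega)
        fun heq => hs₀ρ (heq ▸ hc₀))
      (fun _ hI => exists_mem_linkRel_comp_notMem (by omega) hρr hσr hσs hc₀ hs₀ hs₀ρ hI)
  refine hmax.2 _ (isClone_pol2 ρ (linkRel ρ σ)) ⟨?_, ?_⟩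
  · exact ssubset_of_subset_not_subset (fun f hf => ⟨hf.1, hf.1.linkRel hf.2⟩)
      fun hsub => hFσ (hsub hF).2
  · exact ssubset_of_subset_not_subset (fun f hf => hf.1) fun hsub => hGδ (hsub hG).2

/-- Proposition 5 — for `2 ≤ s < h`, maximality forces type IV. -/
theorem typeIV_of_maximal {k h s : ℕ} (hk : 3 ≤ k) (hs : 2 ≤ s) (hsh : s < h)
    (ρ : Set (Fin h → Fin k)) (σ : Set (Fin s → Fin k))
    (hρ : IsCentralRel ρ) (hσ : IsCentralRel σ)
    (hmax : MaximalIn (Pol2 ρ σ) (Pol1 ρ)) :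
    (Center ρ ∩ Center σ).Nonempty :=
  typeIV_of_maximal_general hs hsh ρ σ hρ hσ hmax
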